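/- arXiv:2604.01768 — 3 statements merged into one kernel-verified Lean document; each statement's English description precedes it below -/
import Mathlib

section
/- Let n ≥ 1, M, K > 0 and 0 ≤ t < T. Let α : ℝⁿ × ℝ → ℝⁿ satisfy ‖α(x,s)‖ ≤ M for all x, s. Let Φ : ℝⁿ × ℝ → ℝⁿ be such that for each x the map s ↦ Φ(x,s) satisfies ∂ₛΦ(x,s) = α(Φ(x,s),s) on [t,T], and for each s ∈ [t,T] the map Φ(·,s) is differentiable. Fix y ∈ ℝⁿ and let w : ℝ → ℝⁿ be differentiable on [t,T] with Φ(w(s),s) = y for all s ∈ [t,T]; assume that for each s the Fréchet derivative D_xΦ(w(s),s) is an invertible linear map whose inverse has operator norm at most K. Then ‖w(s₁) − w(s₂)‖ ≤ M·K·|s₁ − s₂| for all s₁, s₂ ∈ [t,T]. -/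
open Set Filter Topology

/-- The inverse flow `w(s) = Ψ_{t,s}(y)`, characterized by
`Φ(w(s), s) = y`, is Lipschitz in time with constant `M · K` whenever the vector
field is bounded by `M` and the inverse of the spatial Jacobian of the flow has
operator norm at most `K` (estimate (A3)). -/
theorem inverse_flow_lipschitz_in_time
    (n : ℕ) (hn : 1 ≤ n) (M K t T : ℝ) (hM : 0 < M) (hK : 0 < K)
    (ht : 0 ≤ t) (htT : t < T)
    (α : EuclideanSpace ℝ (Fin n) → ℝ → EuclideanSpace ℝ (Fin n))
    (hα : ∀ (x : EuclideanSpace ℝ (Fin n)) (s : ℝ), ‖α x s‖ ≤ M)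
    (Φ : EuclideanSpace ℝ (Fin n) → ℝ → EuclideanSpace ℝ (Fin n))
    (hΦode : ∀ (x : EuclideanSpace ℝ (Fin n)), ∀ s ∈ Icc t T,
      HasDerivAt (fun s' => Φ x s') (α (Φ x s) s) s)
    (hΦdiff : ∀ s ∈ Icc t T, Differentiable ℝ (fun x => Φ x s))
    (y : EuclideanSpace ℝ (Fin n))
    (w : ℝ → EuclideanSpace ℝ (Fin n))
    (hw : ∀ s ∈ Icc t T, DifferentiableAt ℝ w s)
    (hwy : ∀ s ∈ Icc t T, Φ (w s) s = y)
    (hDinv : ∀ s ∈ Icc t T,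
      ∃ Dinv : EuclideanSpace ℝ (Fin n) →L[ℝ] EuclideanSpace ℝ (Fin n),
        (fderiv ℝ (fun x => Φ x s) (w s)).comp Dinv =
          ContinuousLinearMap.id ℝ (EuclideanSpace ℝ (Fin n)) ∧
        Dinv.comp (fderiv ℝ (fun x => Φ x s) (w s)) =
          ContinuousLinearMap.id ℝ (EuclideanSpace ℝ (Fin n)) ∧
        ‖Dinv‖ ≤ K) :
    ∀ s₁ ∈ Icc t T, ∀ s₂ ∈ Icc t T, ‖w s₁ - w s₂‖ ≤ M * K * |s₁ - s₂| := by
  -- In-time Lipschitz bound for the flow at any fixed spatial point.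
  have hΦlip : ∀ (x : EuclideanSpace ℝ (Fin n)), ∀ a ∈ Icc t T, ∀ b ∈ Icc t T,
      ‖Φ x a - Φ x b‖ ≤ M * ‖a - b‖ := by
    intro x a ha b hb
    exact (convex_Icc t T).norm_image_sub_le_of_norm_hasDerivWithin_le
      (fun s hs => ((hΦode x s hs).hasDerivWithinAt))
      (fun s hs => hα (Φ x s) s) hb ha
  -- The norm of the derivative of `w` is at most `M * K` at every point of `Icc t T`.
  have hderiv_bound : ∀ s₀ ∈ Icc t T, ‖deriv w s₀‖ ≤ M * K := by
    intro s₀ hs₀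
    set F : EuclideanSpace ℝ (Fin n) → EuclideanSpace ℝ (Fin n) := fun x => Φ x s₀ with hF
    set v : EuclideanSpace ℝ (Fin n) := deriv w s₀ with hv
    set DF : EuclideanSpace ℝ (Fin n) →L[ℝ] EuclideanSpace ℝ (Fin n) :=
      fderiv ℝ F (w s₀) with hDF
    have hwd : HasDerivAt w v s₀ := (hw s₀ hs₀).hasDerivAt
    have hchain : HasDerivAt (fun s => F (w s)) (DF v) s₀ :=
      ((hΦdiff s₀ hs₀ (w s₀)).hasFDerivAt).comp_hasDerivAt s₀ hwd
    -- Difference quotient bound for `F ∘ w` on `Icc t T`.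
    have hquot : ∀ s ∈ Icc t T, ‖F (w s) - F (w s₀)‖ ≤ M * ‖s - s₀‖ := by
      intro s hs
      have h1 : F (w s₀) = y := hwy s₀ hs₀
      have h2 : Φ (w s) s = y := hwy s hs
      have : F (w s) - F (w s₀) = Φ (w s) s₀ - Φ (w s) s := by
        rw [h1, ← h2]
      rw [this]
      have := hΦlip (w s) s₀ hs₀ s hs
      calc ‖Φ (w s) s₀ - Φ (w s) s‖ ≤ M * ‖s₀ - s‖ := this
        _ = M * ‖s - s₀‖ := by rw [norm_sub_rev]
    -- Hence `‖DF v‖ ≤ M` by taking the limit of the difference quotient within `Icc t T`.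
    have hDFv : ‖DF v‖ ≤ M := by
      have hwithin : HasDerivWithinAt (fun s => F (w s)) (DF v) (Icc t T) s₀ :=
        hchain.hasDerivWithinAt
      have hslope := hasDerivWithinAt_iff_tendsto_slope.1 hwithin
      have hne : (𝓝[Icc t T \ {s₀}] s₀).NeBot := by
        rcases lt_or_ge s₀ T with h | h
        · have hsub : Ioc s₀ T ⊆ Icc t T \ {s₀} := fun z hz =>
            ⟨⟨hs₀.1.trans hz.1.le, hz.2⟩, ne_of_gt hz.1⟩
          have : (𝓝[Ioc s₀ T] s₀).NeBot := by
            rw [nhdsWithin_Ioc_eq_nhdsGT h]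
            infer_instance
          exact this.mono (nhdsWithin_mono _ hsub)
        · have hs₀T : s₀ = T := le_antisymm hs₀.2 h
          have hsub : Ico t s₀ ⊆ Icc t T \ {s₀} := fun z hz =>
            ⟨⟨hz.1, le_of_lt (hz.2.trans_le (hs₀T ▸ le_refl s₀))⟩, ne_of_lt hz.2⟩
          have : (𝓝[Ico t s₀] s₀).NeBot := by
            rw [nhdsWithin_Ico_eq_nhdsLT (hs₀T ▸ htT)]
            infer_instance
          exact this.mono (nhdsWithin_mono _ hsub)
      refine le_of_tendsto hslope.norm ?_
      filter_upwards [self_mem_nhdsWithin] with s hs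
      have hsIcc : s ∈ Icc t T := hs.1
      have hsne : s ≠ s₀ := hs.2
      have : slope (fun s => F (w s)) s₀ s = (s - s₀)⁻¹ • (F (w s) - F (w s₀)) := by
        simp [slope_def_module]
      rw [this, norm_smul]
      have hpos : (0:ℝ) < ‖s - s₀‖ := by
        simpa [norm_pos_iff, sub_eq_zero] using hsne
      calc ‖(s - s₀)⁻¹‖ * ‖F (w s) - F (w s₀)‖
          ≤ ‖(s - s₀)⁻¹‖ * (M * ‖s - s₀‖) := by
            gcongr
            exact hquot s hsIcc
        _ = M := by
            rw [norm_inv]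
            have : |s - s₀| ≠ 0 := by simpa [Real.norm_eq_abs] using hpos.ne'
            field_simp [Real.norm_eq_abs]
    -- Pull back through the inverse Jacobian.
    obtain ⟨Dinv, _, hid, hDinvK⟩ := hDinv s₀ hs₀
    have hvv : Dinv (DF v) = v := by
      have := congrArg (fun (L : EuclideanSpace ℝ (Fin n) →L[ℝ] EuclideanSpace ℝ (Fin n)) => L v) hid
      simpa using this
    calc ‖v‖ = ‖Dinv (DF v)‖ := by rw [hvv]
      _ ≤ ‖Dinv‖ * ‖DF v‖ := Dinv.le_opNorm _
      _ ≤ K * M := by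
          apply mul_le_mul hDinvK hDFv (norm_nonneg _) hK.le
      _ = M * K := mul_comm K M
  -- Conclude with the mean value inequality.
  intro s₁ hs₁ s₂ hs₂
  have := (convex_Icc t T).norm_image_sub_le_of_norm_hasDerivWithin_le
    (fun s hs => ((hw s hs).hasDerivAt).hasDerivWithinAt)
    hderiv_bound hs₂ hs₁
  simpa [Real.norm_eq_abs] using this
end

section
/- Let n ≥ 1, M > 0 and 0 ≤ t < T. Let B : ℝ → Matrix n n ℝ be continuous with operator norm ‖B(s)‖ ≤ M (with respect to the Euclidean norm on ℝⁿ) for all s ∈ [t,T], and suppose Y : ℝ → Matrix n n ℝ is differentiable on [t,T] with Y'(s) = B(s) * Y(s) on [t,T] and Y(t) = 1. Then for every s ∈ [t,T], e^{−nM(s−t)} ≤ det Y(s) ≤ e^{nM(s−t)}. -/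
open Set
open scoped Matrix.Norms.L2Operator

set_option maxHeartbeats 1000000 in
lemma det_bound {n : ℕ} (m : Fin n → Fin n → ℝ) :
    ‖(Matrix.of m).det‖ ≤ (n.factorial : ℝ) * ∏ i, ‖m i‖ := by
  rw [Matrix.det_apply]
  refine le_trans (norm_sum_le _ _) ?_
  have hcard : (Finset.univ : Finset (Equiv.Perm (Fin n))).card = n.factorial := by
    simp [Fintype.card_perm]
  calc ∑ σ : Equiv.Perm (Fin n), ‖Equiv.Perm.sign σ • ∏ i, Matrix.of m (σ i) i‖
      ≤ ∑ _σ : Equiv.Perm (Fin n), ∏ i, ‖m i‖ := by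
        refine Finset.sum_le_sum fun σ _ => ?_
        have key : ‖∏ i, Matrix.of m (σ i) i‖ ≤ ∏ i, ‖m i‖ := by
          calc ‖∏ i, Matrix.of m (σ i) i‖
              = ∏ i, ‖Matrix.of m (σ i) i‖ := by
                simp only [Real.norm_eq_abs, Finset.abs_prod]
          _ ≤ ∏ i, ‖m (σ i)‖ := by
              refine Finset.prod_le_prod (fun i _ => norm_nonneg _) fun i _ => ?_
              exact norm_le_pi_norm (m (σ i)) i
          _ = ∏ i, ‖m i‖ := Equiv.prod_comp σ (fun i => ‖m i‖)
        rcases Int.units_eq_one_or (Equiv.Perm.sign σ) with h | h <;>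
          simp only [h, one_smul, Units.neg_smul, norm_neg] <;> exact key
  _ = n.factorial * ∏ i, ‖m i‖ := by
        rw [Finset.sum_const, hcard, nsmul_eq_mul]

noncomputable def detCM (n : ℕ) : ContinuousMultilinearMap ℝ (fun _ : Fin n => (Fin n → ℝ)) ℝ :=
  (Matrix.detRowAlternating (R := ℝ) (n := Fin n)).toMultilinearMap.mkContinuous
    (n.factorial) (fun m => det_bound m)

lemma detCM_apply {n : ℕ} (A : Matrix (Fin n) (Fin n) ℝ) : detCM n (fun i => A i) = A.det := rfl

-- Liouville derivative
lemma det_hasDerivAt' {n : ℕ} (Y : ℝ → Matrix (Fin n) (Fin n) ℝ)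
    (B : Matrix (Fin n) (Fin n) ℝ) (s : ℝ)
    (hY : ∀ i : Fin n, HasDerivAt (fun u => Y u i) ((B * Y s) i) s) :
    HasDerivAt (fun u => (Y u).det) (B.trace * (Y s).det) s := by
  have h1 : HasDerivAt (fun u => (fun i => Y u i)) (fun i => (B * Y s) i) s :=
    hasDerivAt_pi.2 hY
  have h2 := ((detCM n).hasFDerivAt (x := fun i => Y s i)).comp_hasDerivAt s h1
  have h3 : (detCM n).linearDeriv (fun i => Y s i) (fun i => (B * Y s) i)
      = B.trace * (Y s).det := by
    rw [ContinuousMultilinearMap.linearDeriv_apply]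
    have key : ∀ i : Fin n, (detCM n) (Function.update (fun j => Y s j) i ((B * Y s) i))
        = B i i * (Y s).det := by
      intro i
      have hrow : ((B * Y s) i) = ∑ k, B i k • Y s k := by
        funext j
        simp [Matrix.mul_apply, Finset.sum_apply]
      have : (detCM n) (Function.update (fun j => Y s j) i ((B * Y s) i))
          = ((Y s).updateRow i (∑ k, B i k • Y s k)).det := by
        rw [hrow]; rfl
      rw [this, Matrix.det_updateRow_sum]
      simp [smul_eq_mul]
    rw [Finset.sum_congr rfl (fun i _ => key i)]
    rw [← Finset.sum_mul, Matrix.trace]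
    rfl
  rw [← h3]
  exact h2

open scoped Matrix.Norms.L2Operator

-- coordinate bound in EuclideanSpace
lemma euclid_coord_le {n : ℕ} (y : EuclideanSpace ℝ (Fin n)) (i : Fin n) : |y i| ≤ ‖y‖ := by
  rw [EuclideanSpace.norm_eq]
  calc |y i| = Real.sqrt (|y i|^2) := by rw [Real.sqrt_sq_eq_abs, abs_abs]
  _ ≤ _ := by
      apply Real.sqrt_le_sqrt
      exact Finset.single_le_sum (f := fun j => ‖y j‖^2) (fun j _ => by positivity) (Finset.mem_univ i)

lemma entry_le_opNorm {n : ℕ} (A : Matrix (Fin n) (Fin n) ℝ) (i j : Fin n) : |A i j| ≤ ‖A‖ := by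
  have h := A.l2_opNorm_mulVec (EuclideanSpace.single j (1:ℝ))
  rw [EuclideanSpace.norm_single, norm_one, mul_one] at h
  refine le_trans ?_ h
  have := euclid_coord_le ((EuclideanSpace.equiv (Fin n) ℝ).symm (A.mulVec (EuclideanSpace.single j (1:ℝ)))) i
  refine le_trans (le_of_eq ?_) this
  congr 1
  show A i j = (A.mulVec (Pi.single j (1:ℝ))) i
  simp [Matrix.mulVec_single]

lemma trace_le {n : ℕ} (A : Matrix (Fin n) (Fin n) ℝ) (lemA : ∀ i j, |A i j| ≤ ‖A‖) :
    |A.trace| ≤ n * ‖A‖ := by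
  rw [Matrix.trace]
  calc |∑ i, A.diag i| ≤ ∑ i : Fin n, |A.diag i| := Finset.abs_sum_le_sum_abs _ _
  _ ≤ ∑ _i : Fin n, ‖A‖ := Finset.sum_le_sum fun i _ => lemA i i
  _ = n * ‖A‖ := by simp [Finset.sum_const, nsmul_eq_mul]

/-- The Jacobian determinant of the flow is pinched between
`exp (-nM(s-t))` and `exp (nM(s-t))` (estimate (A5)): if `Y' = B(s) * Y`,
`Y(t) = 1`, with `‖B(s)‖ ≤ M` in the operator norm induced by the Euclidean
norm, then `exp (-nM(s-t)) ≤ det Y(s) ≤ exp (nM(s-t))`. -/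
theorem jacobian_determinant_pinched
    (n : ℕ) (hn : 1 ≤ n) (M t T : ℝ) (hM : 0 < M) (ht : 0 ≤ t) (htT : t < T)
    (B : ℝ → Matrix (Fin n) (Fin n) ℝ)
    (hBcont : Continuous B)
    (hBnorm : ∀ s ∈ Icc t T, ‖B s‖ ≤ M)
    (Y : ℝ → Matrix (Fin n) (Fin n) ℝ)
    (hY : ∀ s ∈ Icc t T, HasDerivAt Y (B s * Y s) s)
    (hYt : Y t = 1) :
    ∀ s ∈ Icc t T,
      Real.exp (-(n * M * (s - t))) ≤ (Y s).det ∧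
      (Y s).det ≤ Real.exp (n * M * (s - t)) := by
  -- row projection as a continuous linear map
  have rowCLM : ∀ i : Fin n, ∃ ℓ : Matrix (Fin n) (Fin n) ℝ →L[ℝ] (Fin n → ℝ),
      ∀ A : Matrix (Fin n) (Fin n) ℝ, ℓ A = A i := by
    intro i
    refine ⟨LinearMap.toContinuousLinearMap
      { toFun := fun A : Matrix (Fin n) (Fin n) ℝ => (A i : Fin n → ℝ)
        map_add' := fun _ _ => rfl
        map_smul' := fun _ _ => rfl }, fun A => rfl⟩
  -- derivative of the determinant
  have hdet : ∀ s ∈ Icc t T,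
      HasDerivAt (fun u => (Y u).det) ((B s).trace * (Y s).det) s := by
    intro s hs
    refine det_hasDerivAt' Y (B s) s fun i => ?_
    obtain ⟨ℓ, hℓ⟩ := rowCLM i
    have h := ℓ.hasFDerivAt.comp_hasDerivAt s (hY s hs)
    have heq : (⇑ℓ ∘ Y) = fun u => Y u i := funext fun u => hℓ (Y u)
    rw [heq, hℓ] at h
    exact h
  -- trace is continuous
  have htr : Continuous fun s => (B s).trace := by
    have : Continuous fun A : Matrix (Fin n) (Fin n) ℝ => A.trace :=
      LinearMap.continuous_of_finiteDimensional (Matrix.traceLinearMap (Fin n) ℝ ℝ)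
    exact this.comp hBcont
  -- the integral of the trace
  set φ : ℝ → ℝ := fun s => ∫ u in t..s, (B u).trace with hφdef
  have hφderiv : ∀ s : ℝ, HasDerivAt φ ((B s).trace) s := fun s =>
    (htr.integral_hasStrictDerivAt t s).hasDerivAt
  -- F = det ∘ Y * exp (-φ) has zero derivative
  set F : ℝ → ℝ := fun s => (Y s).det * Real.exp (-φ s) with hFdef
  have hF : ∀ s ∈ Icc t T, HasDerivAt F 0 s := by
    intro s hs
    have h1 : HasDerivAt (fun u => Real.exp (-φ u)) (Real.exp (-φ s) * -(B s).trace) s :=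
      ((hφderiv s).neg).exp
    have h2 := (hdet s hs).mul h1
    convert h2 using 1
    · rfl
    · rfl
    · rfl
    · ring
  have hFconst : ∀ s ∈ Icc t T, F s = F t := by
    refine constant_of_has_deriv_right_zero (fun s hs => (hF s hs).continuousAt.continuousWithinAt)
      (fun s hs => ((hF s (Ico_subset_Icc_self hs)).hasDerivWithinAt))
  have hFt : F t = 1 := by
    simp [hFdef, hφdef, hYt, intervalIntegral.integral_same]
  -- hence det (Y s) = exp (φ s)
  have hdetval : ∀ s ∈ Icc t T, (Y s).det = Real.exp (φ s) := by
    intro s hs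
    have := (hFconst s hs).trans hFt
    have h := congrArg (fun x => x * Real.exp (φ s)) this
    simp only [hFdef] at h
    rwa [one_mul, mul_assoc, ← Real.exp_add, neg_add_cancel, Real.exp_zero, mul_one] at h
  -- bound on φ
  intro s hs
  obtain ⟨hts, hsT⟩ := hs
  have hφbound : |φ s| ≤ n * M * (s - t) := by
    have hb : ∀ u ∈ Set.uIoc t s, ‖(B u).trace‖ ≤ n * M := by
      intro u hu
      rw [Set.uIoc_of_le hts] at hu
      have huI : u ∈ Icc t T := ⟨le_of_lt hu.1, le_trans hu.2 hsT⟩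
      calc ‖(B u).trace‖ ≤ n * ‖B u‖ := trace_le (B u) (entry_le_opNorm (B u))
      _ ≤ n * M := by
          apply mul_le_mul_of_nonneg_left (hBnorm u huI) (by positivity)
    have := intervalIntegral.norm_integral_le_of_norm_le_const hb
    rwa [abs_of_nonneg (sub_nonneg.2 hts)] at this
  rw [hdetval s ⟨hts, hsT⟩]
  rw [abs_le] at hφbound
  constructor
  · exact Real.exp_le_exp.2 hφbound.1
  · exact Real.exp_le_exp.2 hφbound.2
end

section
/- Let n ≥ 1, D ≥ 0 and 0 ≤ t < T. Let α : ℝⁿ × ℝ → ℝⁿ be such that for each s ∈ [t,T] the map α(·,s) is continuously differentiable with |div_x α(x,s)| ≤ D for all x. Let K ⊆ ℝⁿ be compact and let m : ℝⁿ × [t,T] → ℝ be continuously differentiable, with m(·,s) supported in K for every s ∈ [t,T], satisfying the continuity equation ∂ₛ m(x,s) + div_x( α(x,s) m(x,s) ) = 0 pointwise on ℝⁿ × [t,T]. Then for every s ∈ [t,T], ‖m(·,s)‖_{L²} ≤ e^{D(s−t)/2} · ‖m(·,t)‖_{L²}, where ‖·‖_{L²} is the L² norm with respect to Lebesgue measure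 on ℝⁿ. -/
open Set MeasureTheory

/-- The divergence of a vector field on `ℝⁿ`, as the trace of its Fréchet
derivative. -/
noncomputable def divergence {n : ℕ}
    (v : EuclideanSpace ℝ (Fin n) → EuclideanSpace ℝ (Fin n))
    (x : EuclideanSpace ℝ (Fin n)) : ℝ :=
  LinearMap.trace ℝ (EuclideanSpace ℝ (Fin n)) (fderiv ℝ v x).toLinearMap

lemma trace_clm {n : ℕ} (A : EuclideanSpace ℝ (Fin n) →L[ℝ] EuclideanSpace ℝ (Fin n)) :
    LinearMap.trace ℝ _ A.toLinearMap = ∑ i, A (EuclideanSpace.basisFun (Fin n) ℝ i) i := by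
  rw [LinearMap.trace_eq_matrix_trace ℝ (EuclideanSpace.basisFun (Fin n) ℝ).toBasis]
  rw [Matrix.trace]
  congr 1
  ext i
  simp [Matrix.diag, LinearMap.toMatrix_apply, EuclideanSpace.basisFun]

lemma trace_smulRight {n : ℕ} (l : EuclideanSpace ℝ (Fin n) →L[ℝ] ℝ)
    (v : EuclideanSpace ℝ (Fin n)) :
    LinearMap.trace ℝ _ (l.smulRight v).toLinearMap = l v := by
  rw [trace_clm]
  have hv : v = ∑ i, v i • EuclideanSpace.basisFun (Fin n) ℝ i := by
    have := (EuclideanSpace.basisFun (Fin n) ℝ).sum_repr v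
    simp only [EuclideanSpace.basisFun_repr] at this
    exact this.symm
  conv_rhs => rw [hv]
  rw [map_sum]
  simp only [ContinuousLinearMap.smulRight_apply, PiLp.smul_apply, smul_eq_mul, _root_.map_smul]
  exact Finset.sum_congr rfl fun i _ => by
    rw [EuclideanSpace.basisFun_apply]
    exact mul_comm _ _

lemma divergence_smul {n : ℕ} {f : EuclideanSpace ℝ (Fin n) → ℝ}
    {v : EuclideanSpace ℝ (Fin n) → EuclideanSpace ℝ (Fin n)}
    {x : EuclideanSpace ℝ (Fin n)}
    (hf : DifferentiableAt ℝ f x) (hv : DifferentiableAt ℝ v x) :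
    divergence (fun y => f y • v y) x = f x * divergence v x + fderiv ℝ f x (v x) := by
  unfold divergence
  rw [fderiv_fun_smul hf hv]
  simp only [ContinuousLinearMap.coe_add, ContinuousLinearMap.coe_smul, map_add, LinearMap.map_smul,
    smul_eq_mul, trace_smulRight]

lemma integral_divergence_zero {n : ℕ}
    {w : EuclideanSpace ℝ (Fin n) → EuclideanSpace ℝ (Fin n)}
    (hw : ContDiff ℝ 1 w) (hcs : HasCompactSupport w) :
    ∫ x, divergence w x = 0 := by
  have hdiff := hw.differentiable one_ne_zero
  have hcoord : ∀ i : Fin n, ContDiff ℝ 1 (fun y => w y i) := by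
    intro i
    exact (EuclideanSpace.proj (𝕜 := ℝ) (ι := Fin n) i).contDiff.comp hw
  have hcscoord : ∀ i : Fin n, HasCompactSupport (fun y => w y i) := by
    intro i
    exact hcs.comp_left (g := fun u : EuclideanSpace ℝ (Fin n) => u i) rfl
  have key : ∀ (x : EuclideanSpace ℝ (Fin n)), divergence w x =
      ∑ i, fderiv ℝ (fun y => w y i) x (EuclideanSpace.basisFun (Fin n) ℝ i) := by
    intro x
    rw [divergence, trace_clm]
    refine Finset.sum_congr rfl fun i _ => ?_
    have : HasFDerivAt (fun y => w y i)
        ((EuclideanSpace.proj (𝕜 := ℝ) (ι := Fin n) i).comp (fderiv ℝ w x)) x :=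
      (EuclideanSpace.proj (𝕜 := ℝ) (ι := Fin n) i).hasFDerivAt.comp x (hdiff x).hasFDerivAt
    rw [this.fderiv]
    rfl
  rw [integral_congr_ae (Filter.Eventually.of_forall key)]
  have hint : ∀ i : Fin n, Integrable
      (fun x => fderiv ℝ (fun y => w y i) x (EuclideanSpace.basisFun (Fin n) ℝ i)) := by
    intro i
    apply Continuous.integrable_of_hasCompactSupport
    · exact (ContinuousLinearMap.apply ℝ ℝ
        (EuclideanSpace.basisFun (Fin n) ℝ i)).continuous.comp
        ((hcoord i).continuous_fderiv one_ne_zero)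
    · exact ((hcscoord i).fderiv ℝ).comp_left (g := fun L :
        EuclideanSpace ℝ (Fin n) →L[ℝ] ℝ => L (EuclideanSpace.basisFun (Fin n) ℝ i)) rfl
  rw [integral_finset_sum _ (fun i _ => hint i)]
  refine Finset.sum_eq_zero fun i _ => ?_
  have := integral_mul_fderiv_eq_neg_fderiv_mul_of_integrable (μ := volume)
    (f := fun _ : EuclideanSpace ℝ (Fin n) => (1:ℝ)) (g := fun y => w y i)
    (v := EuclideanSpace.basisFun (Fin n) ℝ i) ?_ ?_ ?_ ?_ ?_
  · simpa using this
  · simp [fderiv_const]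
  · simpa using hint i
  · simpa using ((hcoord i).continuous).integrable_of_hasCompactSupport (hcscoord i)
  · exact fun x _ => differentiableAt_const (1:ℝ)
  · exact fun x _ => (hcoord i).differentiable one_ne_zero x

lemma divergence_continuous {n : ℕ}
    {w : EuclideanSpace ℝ (Fin n) → EuclideanSpace ℝ (Fin n)}
    (hw : ContDiff ℝ 1 w) : Continuous (divergence w) := by
  have h : divergence w = fun x =>
      ∑ i, fderiv ℝ w x (EuclideanSpace.basisFun (Fin n) ℝ i) i :=
    funext fun x => trace_clm _
  rw [h]
  refine continuous_finset_sum _ fun i _ => ?_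
  exact (EuclideanSpace.proj (𝕜 := ℝ) (ι := Fin n) i).continuous.comp
    ((ContinuousLinearMap.apply ℝ (EuclideanSpace ℝ (Fin n))
      (EuclideanSpace.basisFun (Fin n) ℝ i)).continuous.comp
      (hw.continuous_fderiv one_ne_zero))

/-- Exponential `L²` estimate for solutions of the continuity
equation `∂ₛ m + div(α m) = 0` with `|div α| ≤ D`:
`‖m(·,s)‖_{L²} ≤ e^{D(s−t)/2} ‖m(·,t)‖_{L²}` (the `L²` part of Prop. 2.3). -/
theorem continuity_equation_L2_estimate
    (n : ℕ) (hn : 1 ≤ n) (D t T : ℝ) (hD : 0 ≤ D) (ht : 0 ≤ t) (htT : t < T)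
    (α : EuclideanSpace ℝ (Fin n) → ℝ → EuclideanSpace ℝ (Fin n))
    (hαreg : ∀ s ∈ Icc t T, ContDiff ℝ 1 (fun x => α x s))
    (hαdiv : ∀ (x : EuclideanSpace ℝ (Fin n)), ∀ s ∈ Icc t T,
      |divergence (fun x' => α x' s) x| ≤ D)
    (K : Set (EuclideanSpace ℝ (Fin n))) (hK : IsCompact K)
    (m : EuclideanSpace ℝ (Fin n) × ℝ → ℝ)
    (hm : ContDiff ℝ 1 m)
    (hsupp : ∀ s ∈ Icc t T, Function.support (fun x => m (x, s)) ⊆ K)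
    (hpde : ∀ (x : EuclideanSpace ℝ (Fin n)), ∀ s ∈ Icc t T,
      deriv (fun s' => m (x, s')) s +
        divergence (fun x' => m (x', s) • α x' s) x = 0) :
    ∀ s ∈ Icc t T,
      Real.sqrt (∫ x, m (x, s) ^ 2) ≤
        Real.exp (D * (s - t) / 2) * Real.sqrt (∫ x, m (x, t) ^ 2) := by
  -- a ball containing K
  obtain ⟨R, hKR⟩ := hK.isBounded.subset_ball (0 : (EuclideanSpace ℝ (Fin n)))
  set U : Set (EuclideanSpace ℝ (Fin n)) := Metric.ball (0 : (EuclideanSpace ℝ (Fin n))) R with hU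
  have hKU : K ⊆ U := hKR
  set μ : Measure (EuclideanSpace ℝ (Fin n)) := volume.restrict U with hμ
  -- the time derivative of m as a continuous function
  set g : (EuclideanSpace ℝ (Fin n)) × ℝ → ℝ := fun p => fderiv ℝ m p ((0 : (EuclideanSpace ℝ (Fin n))), (1 : ℝ)) with hg
  have gcont : Continuous g :=
    (ContinuousLinearMap.apply ℝ ℝ ((0 : (EuclideanSpace ℝ (Fin n))), (1 : ℝ))).continuous.comp
      (hm.continuous_fderiv one_ne_zero)
  have hderiv : ∀ (x : (EuclideanSpace ℝ (Fin n))) (s : ℝ), HasDerivAt (fun s' => m (x, s')) (g (x, s)) s := by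
    intro x s
    have h1 : HasDerivAt (fun s' : ℝ => ((x, s') : (EuclideanSpace ℝ (Fin n)) × ℝ)) ((0 : (EuclideanSpace ℝ (Fin n))), (1 : ℝ)) s :=
      (hasDerivAt_const s x).prodMk (hasDerivAt_id s)
    exact ((hm.differentiable one_ne_zero (x, s)).hasFDerivAt).comp_hasDerivAt s h1
  set F : ℝ → (EuclideanSpace ℝ (Fin n)) → ℝ := fun s x => m (x, s) ^ 2 with hF
  set F' : ℝ → (EuclideanSpace ℝ (Fin n)) → ℝ := fun s x => 2 * m (x, s) * g (x, s) with hF'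
  have hFcont : ∀ s, Continuous (F s) := by
    intro s
    exact (hm.continuous.comp (continuous_id.prodMk continuous_const)).pow 2
  have hF'cont : ∀ s, Continuous (F' s) := by
    intro s
    exact ((continuous_const.mul
      (hm.continuous.comp (continuous_id.prodMk continuous_const))).mul
      (gcont.comp (continuous_id.prodMk continuous_const)))
  have hFderiv : ∀ (x : (EuclideanSpace ℝ (Fin n))) (s : ℝ), HasDerivAt (fun s' => F s' x) (F' s x) s := by
    intro x s
    have := (hderiv x s).fun_pow 2
    simpa [hF, hF'] using this
  -- uniform bound on compact region
  obtain ⟨C, hC⟩ := ((isCompact_closedBall (0 : (EuclideanSpace ℝ (Fin n))) R).prod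
    (isCompact_Icc (a := t - 1) (b := T + 1))).exists_bound_of_continuousOn
    (f := fun p : (EuclideanSpace ℝ (Fin n)) × ℝ => 2 * m p * g p)
    ((continuous_const.mul hm.continuous).mul gcont).continuousOn
  set Φ : ℝ → ℝ := fun s => ∫ x, F s x ∂μ with hΦ
  set Ψ : ℝ → ℝ := fun s => ∫ x, F' s x ∂μ with hΨ
  have hintF : ∀ s, Integrable (F s) μ := fun s =>
    (((hFcont s).continuousOn.integrableOn_compact
      (isCompact_closedBall (0 : (EuclideanSpace ℝ (Fin n))) R)).mono_set Metric.ball_subset_closedBall)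
  have hintF' : ∀ s, Integrable (F' s) μ := fun s =>
    (((hF'cont s).continuousOn.integrableOn_compact
      (isCompact_closedBall (0 : (EuclideanSpace ℝ (Fin n))) R)).mono_set Metric.ball_subset_closedBall)
  have hΦnonneg : ∀ s, 0 ≤ Φ s := fun s =>
    integral_nonneg fun x => sq_nonneg _
  -- differentiation under the integral sign
  have hasderiv : ∀ s₀ ∈ Icc t T, HasDerivAt Φ (Ψ s₀) s₀ := by
    intro s₀ hs₀
    refine (hasDerivAt_integral_of_dominated_loc_of_deriv_le (s := Metric.ball s₀ (1/2)) (Metric.ball_mem_nhds _ (by norm_num))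
      (Filter.Eventually.of_forall fun s => (hFcont s).aestronglyMeasurable)
      (hintF s₀) ((hF'cont s₀).aestronglyMeasurable) ?_
      (bound := fun _ => C) ?_ ?_).2
    · refine (ae_restrict_mem measurableSet_ball).mono fun x hx => ?_
      intro s hs
      have hxc : x ∈ Metric.closedBall (0 : (EuclideanSpace ℝ (Fin n))) R := Metric.ball_subset_closedBall hx
      have hsI : s ∈ Icc (t - 1) (T + 1) := by
        rw [Metric.mem_ball, Real.dist_eq] at hs
        constructor
        · nlinarith [abs_lt.mp hs, hs₀.1]
        · nlinarith [abs_lt.mp hs, hs₀.2]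
      exact hC (x, s) ⟨hxc, hsI⟩
    · exact integrableOn_const measure_ball_lt_top.ne
    · exact Filter.Eventually.of_forall fun x s _ => hFderiv x s
  -- the key differential inequality
  have hbound : ∀ s ∈ Icc t T, ‖Ψ s‖ ≤ D * ‖Φ s‖ + 0 := by
    intro s hs
    set f : (EuclideanSpace ℝ (Fin n)) → ℝ := fun x => m (x, s) with hf
    set v : (EuclideanSpace ℝ (Fin n)) → (EuclideanSpace ℝ (Fin n)) := fun x => α x s with hv
    have hfC : ContDiff ℝ 1 f := hm.comp (contDiff_id.prodMk contDiff_const)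
    have hvC : ContDiff ℝ 1 v := hαreg s hs
    have hfd : Differentiable ℝ f := hfC.differentiable one_ne_zero
    have hvd : Differentiable ℝ v := hvC.differentiable one_ne_zero
    have hsuppf : Function.support f ⊆ K := hsupp s hs
    set w : (EuclideanSpace ℝ (Fin n)) → (EuclideanSpace ℝ (Fin n)) := fun y => (f y) ^ 2 • v y with hw
    have hwC : ContDiff ℝ 1 w := (hfC.pow 2).smul hvC
    have hwcs : HasCompactSupport w := by
      apply HasCompactSupport.intro hK
      intro x hx
      have : f x = 0 := by
        by_contra h
        exact hx (hsuppf h)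
      simp [hw, this]
    -- pointwise identity
    have keyA : ∀ x : (EuclideanSpace ℝ (Fin n)), F' s x = -(divergence w x + f x ^ 2 * divergence v x) := by
      intro x
      have hd := (hderiv x s).deriv
      have hp := hpde x s hs
      rw [hd] at hp
      have hgx : g (x, s) = - divergence (fun x' => m (x', s) • α x' s) x := by
        linarith
      have h1 : divergence (fun x' => m (x', s) • α x' s) x
          = f x * divergence v x + fderiv ℝ f x (v x) :=
        divergence_smul (hfd x) (hvd x)
      have h2 : divergence w x = f x ^ 2 * divergence v x
          + 2 * f x * fderiv ℝ f x (v x) := by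
        have h3 : divergence w x = (fun y => f y ^ 2) x * divergence v x
            + fderiv ℝ (fun y => f y ^ 2) x (v x) :=
          divergence_smul ((hfd x).pow 2) (hvd x)
        have h4 : fderiv ℝ (fun y => f y ^ 2) x = (2 * f x) • fderiv ℝ f x := by
          have heq : (fun y => f y ^ 2) = fun y => f y * f y := by
            funext y; ring
          rw [heq, fderiv_fun_mul (hfd x) (hfd x), two_mul, add_smul]
        rw [h3, h4]
        simp [mul_assoc]
      simp only [hF', hgx, h1]
      rw [h2]
      have : m (x, s) = f x := rfl
      rw [this]
      ring
    -- the divergence part integrates to zero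
    have hdivint : ∫ x, divergence w x ∂μ = 0 := by
      have hvanish : ∀ x ∉ U, divergence w x = 0 := by
        intro x hx
        have hxK : x ∉ K := fun h => hx (hKU h)
        have hev : w =ᶠ[nhds x] fun _ => (0 : (EuclideanSpace ℝ (Fin n))) := by
          filter_upwards [hK.isClosed.isOpen_compl.mem_nhds hxK] with y hy
          have : f y = 0 := by
            by_contra h
            exact hy (hsuppf h)
          simp [hw, this]
        have : fderiv ℝ w x = 0 := by
          rw [hev.fderiv_eq]
          exact fderiv_const_apply _
        simp [divergence, this]
      rw [hμ, setIntegral_eq_integral_of_forall_compl_eq_zero hvanish]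
      exact integral_divergence_zero hwC hwcs
    have hi1 : Integrable (fun x => divergence w x) μ :=
      ((divergence_continuous hwC).continuousOn.integrableOn_compact
        (isCompact_closedBall (0 : (EuclideanSpace ℝ (Fin n))) R)).mono_set Metric.ball_subset_closedBall
    have hi2 : Integrable (fun x => f x ^ 2 * divergence v x) μ :=
      ((((hfC.continuous).pow 2).mul
        (divergence_continuous hvC)).continuousOn.integrableOn_compact
        (isCompact_closedBall (0 : (EuclideanSpace ℝ (Fin n))) R)).mono_set Metric.ball_subset_closedBall
    have hΨeq : Ψ s = -∫ x, f x ^ 2 * divergence v x ∂μ := by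
      rw [hΨ]
      simp only [keyA]
      rw [integral_neg, integral_add hi1 hi2, hdivint, zero_add]
    rw [hΨeq]
    have h5 : |∫ x, f x ^ 2 * divergence v x ∂μ| ≤ D * Φ s := by
      calc |∫ x, f x ^ 2 * divergence v x ∂μ|
          ≤ ∫ x, |f x ^ 2 * divergence v x| ∂μ := by
            simpa only [Real.norm_eq_abs] using
              norm_integral_le_integral_norm (fun x => f x ^ 2 * divergence v x) (μ := μ)
        _ ≤ ∫ x, D * f x ^ 2 ∂μ := by
            refine integral_mono hi2.abs ((hintF s).const_mul D) fun x => ?_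
            show |f x ^ 2 * divergence v x| ≤ D * f x ^ 2
            rw [abs_mul, abs_of_nonneg (sq_nonneg (f x))]
            have : |divergence v x| ≤ D := hαdiv x s hs
            nlinarith [sq_nonneg (f x), abs_nonneg (divergence v x)]
        _ = D * Φ s := by rw [integral_const_mul]
    rw [Real.norm_eq_abs, abs_neg, Real.norm_eq_abs, abs_of_nonneg (hΦnonneg s), add_zero]
    exact h5
  -- Grönwall
  have hcont : ContinuousOn Φ (Icc t T) := fun s hs =>
    ((hasderiv s hs).continuousAt).continuousWithinAt
  have hgron := norm_le_gronwallBound_of_norm_deriv_right_le (f := Φ) (f' := Ψ)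
    (δ := Φ t) (K := D) (ε := 0) (a := t) (b := T) hcont
    (fun s hs => (hasderiv s (Ico_subset_Icc_self hs)).hasDerivWithinAt)
    (by rw [Real.norm_eq_abs, abs_of_nonneg (hΦnonneg t)])
    (fun s hs => hbound s (Ico_subset_Icc_self hs))
  intro s hs
  have hΦs := hgron s hs
  rw [gronwallBound_ε0, Real.norm_eq_abs, abs_of_nonneg (hΦnonneg s)] at hΦs
  -- identify the integrals over ℝⁿ with the restricted integrals
  have hident : ∀ σ ∈ Icc t T, (∫ x, m (x, σ) ^ 2) = Φ σ := by
    intro σ hσ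
    rw [hΦ, hμ]
    refine (setIntegral_eq_integral_of_forall_compl_eq_zero fun x hx => ?_).symm
    have hxK : x ∉ K := fun h => hx (hKU h)
    have : m (x, σ) = 0 := by
      by_contra h
      exact hxK (hsupp σ hσ h)
    simp [hF, this]
  rw [hident s hs, hident t ⟨le_refl t, le_of_lt htT⟩]
  calc Real.sqrt (Φ s) ≤ Real.sqrt (Φ t * Real.exp (D * (s - t))) :=
        Real.sqrt_le_sqrt hΦs
    _ = Real.exp (D * (s - t) / 2) * Real.sqrt (Φ t) := by
        rw [Real.sqrt_mul (hΦnonneg t)]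
        have hss : Real.sqrt (Real.exp (D * (s - t))) = Real.exp (D * (s - t) / 2) := by
          conv_lhs => rw [show D * (s - t) = D * (s - t) / 2 + D * (s - t) / 2 by ring,
            Real.exp_add]
          exact Real.sqrt_mul_self (Real.exp_nonneg _)
        rw [hss, mul_comm]
end
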